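/- Let k be a commutative ring, A a commutative k-algebra, and (E,Ψ̄), (F,Ψ̿) two left pre-HS-modules over A/k. Then: (1) for every p ∈ ℕ, every nonempty co-ideal Δ ⊆ ℕ^p and every D ∈ HS^p_k(A;Δ), there is a unique k[[s]]_Δ-linear automorphism Ψ^p_Δ(D) of (E⊗_A F)[[s]]_Δ, congruent to the identity modulo classes of series with zero constant term, such that Ψ^p_Δ(D) ∘ μ = μ ∘ (Ψ̄^p_Δ(D) ⊗ Ψ̿^p_Δ(D)), where μ : E[[s]]_Δ ⊗_{k[[s]]_Δ} F[[s]]_Δ → (E⊗_A F)[[s]]_Δ is the natural map μ((Σ e_α s^α) ⊗ (Σ f_α s^α)) = Σ_α (Σ_{α'+α''=α} e_{α'} ⊗ f_{α''}) s^α; (2) the system Ψ = {Ψ^p_Δ} is a left pre-HS-module structure on E⊗_A F over A/k, and it is a HS-module structure whenever Ψ̄ and Ψ̿ are. -/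

import Mathlib

/-!
Testing on constant series reduces the condition `Θ ∘ μ = μ ∘ (Ψ̄ ⊗ Ψ̿)` to
`Θ_α(x ⊗ y) = ∑_{β ≤ α} Ψ̄_β(x) ⊗ Ψ̿_{α-β}(y)`, which determines `Θ`; it defines `Θ_α` on `E ⊗_A F`
because the Leibniz rules of `Ψ̄` and `Ψ̿` make the right-hand side `A`-balanced. Each axiom of a
(pre-)HS-structure for `Θ` then follows, on pure tensors, from the same axiom for `Ψ̄` and `Ψ̿` by
reindexing finite sums over multi-indices; for substitution maps the additional input is
`φ(s^β) φ(s^γ) = φ(s^{β+γ})`, i.e. that `φ •` is multiplicative for every bilinear product.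
-/

open scoped Classical

namespace HS

/-- multi-indices in `ℕ^p` -/
abbrev MIdx (p : ℕ) := Fin p → ℕ

/-- the total weight `|α|` of a multi-index -/
def wt {p : ℕ} (α : MIdx p) : ℕ := ∑ i, α i

/-- a non-empty co-ideal of `ℕ^p` -/
def IsCoideal {p : ℕ} (Δ : Set (MIdx p)) : Prop :=
  Δ.Nonempty ∧ ∀ ⦃α : MIdx p⦄, α ∈ Δ → ∀ ⦃β : MIdx p⦄, β ≤ α → β ∈ Δ

/-- Convolution product of two power series, given by their coefficient families:
this is the multiplication of `R[[s]]_Δ` (in terms of representatives). -/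
def sconv {p : ℕ} {R : Type*} [NonUnitalNonAssocSemiring R] (f g : MIdx p → R) : MIdx p → R :=
  fun α => ∑ β ∈ Finset.Iic α, f β * g (α - β)

/-- Applying a series of linear operators to a series of module elements; for an
operator family `f`, `fapply f` is the induced `k[[s]]_Δ`-linear map `f̃ = ∑ f_β s^β`. -/
def fapply {p : ℕ} {k M N : Type*} [Semiring k] [AddCommMonoid M] [AddCommMonoid N]
    [Module k M] [Module k N] (f : MIdx p → (M →ₗ[k] N)) (m : MIdx p → M) : MIdx p → N :=
  fun α => ∑ β ∈ Finset.Iic α, f β (m (α - β))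

/-- a series of scalars acting on a series of module elements:
the module structure of `M[[s]]_Δ` over `A[[s]]_Δ` (in terms of representatives). -/
def smul' {p : ℕ} {A M : Type*} [Semiring A] [AddCommMonoid M] [Module A M]
    (a : MIdx p → A) (m : MIdx p → M) : MIdx p → M :=
  fun α => ∑ β ∈ Finset.Iic α, a β • m (α - β)

/-- the unit (delta) series `1` -/
def one' {p : ℕ} {R : Type*} [Zero R] [One R] : MIdx p → R :=
  fun α => if α = 0 then 1 else 0

/-- `D` is a `(p,Δ)`-variate Hasse–Schmidt derivation of `A` over `k`:
`D_0 = id` and the Leibniz rule `D_α(xy) = ∑_{β+γ=α} D_β(x) D_γ(y)` for `α ∈ Δ`. -/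
def IsHS (k A : Type*) [CommRing k] [CommRing A] [Algebra k A] {p : ℕ}
    (Δ : Set (MIdx p)) (D : MIdx p → Module.End k A) : Prop :=
  D 0 = 1 ∧ ∀ α ∈ Δ, ∀ x y : A,
    D α (x * y) = ∑ β ∈ Finset.Iic α, D β x * D (α - β) y

/-- A substitution map `φ : A[[s]]_Δ → A[[t]]_∇`, modelled by the family of its
coefficients `C α e = C_e(φ,α)` (the coefficient of `t^e` in `φ(s^α)`):
it is multiplicative on monomials, unital, of order `≥ 1` (so `C α e = 0` for
`|e| < |α|`), kills the classes of monomials `s^α` with `α ∉ Δ`, and is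
normalized to vanish outside `∇`. -/
structure SubstMap (A : Type*) [CommRing A] (p q : ℕ)
    (Δ : Set (MIdx p)) (nab : Set (MIdx q)) where
  C : MIdx p → MIdx q → A
  c_zero : ∀ e ∈ nab, C 0 e = if e = 0 then 1 else 0
  c_mul : ∀ α ∈ Δ, ∀ β ∈ Δ, ∀ e ∈ nab,
    C (α + β) e = ∑ u ∈ Finset.Iic e, C α u * C β (e - u)
  c_ord : ∀ α ∈ Δ, ∀ e ∈ nab, wt e < wt α → C α e = 0
  c_suppL : ∀ α : MIdx p, α ∉ Δ → ∀ e : MIdx q, C α e = 0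
  c_suppR : ∀ (α : MIdx p) (e : MIdx q), e ∉ nab → C α e = 0

variable {A' : Type*} [CommRing A'] {p' q' : ℕ} {Δ' : Set (MIdx p')} {nab' : Set (MIdx q')}

/-- the map `A[[s]]_Δ → A[[t]]_∇` induced by a substitution map -/
def SubstMap.app (φ : SubstMap A' p' q' Δ' nab') (f : MIdx p' → A') : MIdx q' → A' :=
  fun e => ∑ α ∈ Finset.Iic (fun _ => wt e : MIdx p'), φ.C α e * f α

/-- `φ • D` for a series of `k`-linear endomorphisms of `A` -/
def SubstMap.bulletEnd {k : Type*} [CommRing k] [Algebra k A']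
    (φ : SubstMap A' p' q' Δ' nab') (D : MIdx p' → Module.End k A') :
    MIdx q' → Module.End k A' :=
  fun e => ∑ α ∈ Finset.Iic (fun _ => wt e : MIdx p'), φ.C α e • D α

/-- `φ • r` for a series with coefficients in a `k`-algebra `S` over `A`
(with structural map `ι : A → S`) -/
def SubstMap.bulletS {S : Type*} [Ring S] (ι : A' → S)
    (φ : SubstMap A' p' q' Δ' nab') (r : MIdx p' → S) : MIdx q' → S :=
  fun e => ∑ α ∈ Finset.Iic (fun _ => wt e : MIdx p'), ι (φ.C α e) * r α

/-- `r • φ` for a series with coefficients in a `k`-algebra `S` over `A` -/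
def SubstMap.bulletSR {S : Type*} [Ring S] (ι : A' → S)
    (φ : SubstMap A' p' q' Δ' nab') (r : MIdx p' → S) : MIdx q' → S :=
  fun e => ∑ α ∈ Finset.Iic (fun _ => wt e : MIdx p'), r α * ι (φ.C α e)

/-- `φ • m` for a series with coefficients in an `A`-module `M` -/
def SubstMap.bulletM {M : Type*} [AddCommMonoid M] [Module A' M]
    (φ : SubstMap A' p' q' Δ' nab') (m : MIdx p' → M) : MIdx q' → M :=
  fun e => ∑ α ∈ Finset.Iic (fun _ => wt e : MIdx p'), φ.C α e • m α

/-- `φ` has constant coefficients, i.e. all the `C_e(φ,α)` come from `k` -/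
def SubstMap.HasConstCoeffs (k : Type*) [CommRing k] [Algebra k A']
    (φ : SubstMap A' p' q' Δ' nab') : Prop :=
  ∀ (α : MIdx p') (e : MIdx q'), φ.C α e ∈ Set.range (algebraMap k A')

/-- a system of maps `Ψ^p_Δ : HS^p_k(A;Δ) → U^p(End_k(M);Δ)` as in a
(pre-)HS-module structure on `M` over `A/k` -/
abbrev HSSystem (k A M : Type*) [CommRing k] [CommRing A] [Algebra k A]
    [AddCommMonoid M] [Module k M] : Type _ :=
  ∀ (p : ℕ) (Δ : Set (MIdx p)), (MIdx p → Module.End k A) → (MIdx p → Module.End k M)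

/-- `Ψ` is a left pre-HS-module structure on `M` over `A/k`:  for each `p`, each
non-empty co-ideal `Δ ⊆ ℕ^p` and each `D ∈ HS^p_k(A;Δ)`, the automorphism
`Ψ^p_Δ(D)` of `M[[s]]_Δ` (given by its family of coefficients in `End_k(M)`) has
constant coefficient the identity, depends only on the class of `D`, is
multiplicative in `D`, is invertible, satisfies the Leibniz rule
`Ψ^p_Δ(D)·a = D̃(a)·Ψ^p_Δ(D)`, and is compatible with the action of substitution
maps with constant coefficients:  `Ψ^q_∇(φ•D) = φ•Ψ^p_Δ(D)`. -/
def IsPreHSMod (k A M : Type*) [CommRing k] [CommRing A] [Algebra k A]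
    [AddCommGroup M] [Module k M] [Module A M] [IsScalarTower k A M]
    (Ψ : HSSystem k A M) : Prop :=
  ∀ (p : ℕ) (Δ : Set (MIdx p)), IsCoideal Δ →
    ∀ D : MIdx p → Module.End k A, IsHS k A Δ D →
      (Ψ p Δ D 0 = 1)
      ∧ (∀ D' : MIdx p → Module.End k A, IsHS k A Δ D' → (∀ α ∈ Δ, D α = D' α) →
          ∀ α ∈ Δ, Ψ p Δ D α = Ψ p Δ D' α)
      ∧ (∀ E : MIdx p → Module.End k A, IsHS k A Δ E →
          ∀ α ∈ Δ, Ψ p Δ (sconv D E) α = sconv (Ψ p Δ D) (Ψ p Δ E) α)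
      ∧ (∃ Θ : MIdx p → Module.End k M,
          (∀ α ∈ Δ, sconv (Ψ p Δ D) Θ α = (one' : MIdx p → Module.End k M) α)
          ∧ (∀ α ∈ Δ, sconv Θ (Ψ p Δ D) α = (one' : MIdx p → Module.End k M) α))
      ∧ (∀ (a : MIdx p → A) (m : MIdx p → M), ∀ α ∈ Δ,
          fapply (Ψ p Δ D) (smul' a m) α = smul' (fapply D a) (fapply (Ψ p Δ D) m) α)
      ∧ (∀ (q : ℕ) (nab : Set (MIdx q)), IsCoideal nab →
          ∀ φ : SubstMap A p q Δ nab, φ.HasConstCoeffs k →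
          ∀ e ∈ nab, ∀ x : M,
            Ψ q nab (φ.bulletEnd D) e x
              = ∑ α ∈ Finset.Iic (fun _ => wt e : MIdx p), φ.C α e • Ψ p Δ D α x)

/-- `Ψ` is a left HS-module structure on `M` over `A/k`: as `IsPreHSMod`, but with
compatibility with the action of arbitrary substitution maps. -/
def IsHSMod (k A M : Type*) [CommRing k] [CommRing A] [Algebra k A]
    [AddCommGroup M] [Module k M] [Module A M] [IsScalarTower k A M]
    (Ψ : HSSystem k A M) : Prop :=
  ∀ (p : ℕ) (Δ : Set (MIdx p)), IsCoideal Δ →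
    ∀ D : MIdx p → Module.End k A, IsHS k A Δ D →
      (Ψ p Δ D 0 = 1)
      ∧ (∀ D' : MIdx p → Module.End k A, IsHS k A Δ D' → (∀ α ∈ Δ, D α = D' α) →
          ∀ α ∈ Δ, Ψ p Δ D α = Ψ p Δ D' α)
      ∧ (∀ E : MIdx p → Module.End k A, IsHS k A Δ E →
          ∀ α ∈ Δ, Ψ p Δ (sconv D E) α = sconv (Ψ p Δ D) (Ψ p Δ E) α)
      ∧ (∃ Θ : MIdx p → Module.End k M,
          (∀ α ∈ Δ, sconv (Ψ p Δ D) Θ α = (one' : MIdx p → Module.End k M) α)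
          ∧ (∀ α ∈ Δ, sconv Θ (Ψ p Δ D) α = (one' : MIdx p → Module.End k M) α))
      ∧ (∀ (a : MIdx p → A) (m : MIdx p → M), ∀ α ∈ Δ,
          fapply (Ψ p Δ D) (smul' a m) α = smul' (fapply D a) (fapply (Ψ p Δ D) m) α)
      ∧ (∀ (q : ℕ) (nab : Set (MIdx q)), IsCoideal nab →
          ∀ φ : SubstMap A p q Δ nab,
          ∀ e ∈ nab, ∀ x : M,
            Ψ q nab (φ.bulletEnd D) e x
              = ∑ α ∈ Finset.Iic (fun _ => wt e : MIdx p), φ.C α e • Ψ p Δ D α x)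

open scoped TensorProduct

/-- the natural map `μ : E[[s]]_Δ ⊗_{k[[s]]_Δ} F[[s]]_Δ → (E ⊗_A F)[[s]]_Δ`
evaluated on a pure tensor of series -/
noncomputable def muconv {A E F : Type*} [CommRing A]
    [AddCommGroup E] [Module A E] [AddCommGroup F] [Module A F] {p : ℕ}
    (eS : MIdx p → E) (fS : MIdx p → F) : MIdx p → E ⊗[A] F :=
  fun α => ∑ β ∈ Finset.Iic α, eS β ⊗ₜ[A] fS (α - β)

section MultiIndex

variable {p : ℕ}

lemma IsCoideal.zero_mem {Δ : Set (MIdx p)} (hΔ : IsCoideal Δ) : (0 : MIdx p) ∈ Δ :=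
  hΔ.1.elim fun _ hα => hΔ.2 hα zero_le

lemma IsCoideal.mem_of_le {Δ : Set (MIdx p)} (hΔ : IsCoideal Δ) {α β : MIdx p}
    (hα : α ∈ Δ) (h : β ≤ α) : β ∈ Δ :=
  hΔ.2 hα h

lemma Iic_zero : Finset.Iic (0 : MIdx p) = {0} := by
  ext β
  simp

lemma wt_mono {α β : MIdx p} (h : β ≤ α) : wt β ≤ wt α :=
  Finset.sum_le_sum fun i _ => h i

lemma le_wt (α : MIdx p) (i : Fin p) : α i ≤ wt α :=
  Finset.single_le_sum (fun _ _ => Nat.zero_le _) (Finset.mem_univ i)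

lemma wt_sub_lt {α β : MIdx p} (h : β ≤ α) (h0 : β ≠ 0) : wt (α - β) < wt α := by
  obtain ⟨i, hi⟩ := Function.ne_iff.mp h0
  have hsub : wt (α - β) + wt β = wt α := by
    simp only [wt, ← Finset.sum_add_distrib, Pi.sub_apply]
    exact Finset.sum_congr rfl fun j _ => Nat.sub_add_cancel (h j)
  have hpos : 0 < wt β := (Nat.pos_of_ne_zero hi).trans_le (le_wt β i)
  omega

lemma lt_wt_of_not_le_const {α : MIdx p} {w : ℕ} (h : ¬ α ≤ fun _ => w) : w < wt α := by
  obtain ⟨i, hi⟩ : ∃ i, w < α i := by simpa [Pi.le_def] using h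
  exact hi.trans_le (le_wt α i)

end MultiIndex

section Reindex

variable {p : ℕ} {M : Type*} [AddCommMonoid M]

lemma sum_Iic_sum_Iic_assoc (α : MIdx p) (G : MIdx p → MIdx p → MIdx p → M) :
    ∑ β ∈ Finset.Iic α, ∑ u ∈ Finset.Iic β, G u (β - u) (α - β)
      = ∑ u ∈ Finset.Iic α, ∑ v ∈ Finset.Iic (α - u), G u v (α - u - v) := by
  rw [Finset.sum_sigma', Finset.sum_sigma']
  refine Finset.sum_bij' (fun x _ => ⟨x.2, x.1 - x.2⟩) (fun y _ => ⟨y.1 + y.2, y.1⟩)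
    ?_ ?_ ?_ ?_ ?_
  · rintro ⟨β, u⟩ hx
    simp only [Finset.mem_sigma, Finset.mem_Iic] at hx ⊢
    exact ⟨hx.2.trans hx.1, tsub_le_tsub_right hx.1 _⟩
  · rintro ⟨u, v⟩ hy
    simp only [Finset.mem_sigma, Finset.mem_Iic] at hy ⊢
    exact ⟨(le_tsub_iff_left hy.1).mp hy.2, le_self_add⟩
  · rintro ⟨β, u⟩ hx
    simp only [Finset.mem_sigma, Finset.mem_Iic] at hx
    simp [add_tsub_cancel_of_le hx.2]
  · rintro ⟨u, v⟩ _
    simp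
  · rintro ⟨β, u⟩ hx
    simp only [Finset.mem_sigma, Finset.mem_Iic] at hx
    simp [tsub_tsub, add_tsub_cancel_of_le hx.2]

lemma sum_Iic_sum_Iic_tsub_comm (α : MIdx p) (G : MIdx p → MIdx p → M) :
    ∑ b ∈ Finset.Iic α, ∑ c ∈ Finset.Iic (α - b), G b c
      = ∑ c ∈ Finset.Iic α, ∑ b ∈ Finset.Iic (α - c), G b c := by
  have key : ∀ b c : MIdx p, b ≤ α → c ≤ α - b → c ≤ α ∧ b ≤ α - c := fun b c hb hc =>
    have hbc : b + c ≤ α := (le_tsub_iff_left hb).mp hc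
    ⟨le_add_self.trans hbc, le_tsub_of_add_le_right hbc⟩
  rw [Finset.sum_sigma', Finset.sum_sigma']
  refine Finset.sum_bij' (fun x _ => ⟨x.2, x.1⟩) (fun y _ => ⟨y.2, y.1⟩) ?_ ?_
    (fun _ _ => rfl) (fun _ _ => rfl) (fun _ _ => rfl)
  · rintro ⟨b, c⟩ hx
    simp only [Finset.mem_sigma, Finset.mem_Iic] at hx ⊢
    exact key b c hx.1 hx.2
  · rintro ⟨c, b⟩ hy
    simp only [Finset.mem_sigma, Finset.mem_Iic] at hy ⊢
    exact key c b hy.1 hy.2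

/-- The middle-four interchange `(ab)(cd) = (ac)(bd)` of convolution, in index form. -/
lemma sum_Iic_interchange (α : MIdx p) (G : MIdx p → MIdx p → MIdx p → MIdx p → M) :
    ∑ β ∈ Finset.Iic α, ∑ u ∈ Finset.Iic (α - β), ∑ v ∈ Finset.Iic β,
        G v u (β - v) (α - β - u)
      = ∑ γ ∈ Finset.Iic α, ∑ u ∈ Finset.Iic γ, ∑ v ∈ Finset.Iic (α - γ),
        G u (γ - u) v (α - γ - v) := by
  have hL := sum_Iic_sum_Iic_assoc α fun v x r => ∑ u ∈ Finset.Iic r, G v u x (r - u)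
  have hR := sum_Iic_sum_Iic_assoc α fun u x r => ∑ v ∈ Finset.Iic r, G u x v (r - v)
  rw [hR, ← Finset.sum_congr rfl fun β _ => Finset.sum_comm, hL]
  refine Finset.sum_congr rfl fun a _ => ?_
  rw [sum_Iic_sum_Iic_tsub_comm (α - a) fun b c => G a c b (α - a - b - c)]
  exact Finset.sum_congr rfl fun b _ => Finset.sum_congr rfl fun c _ => by rw [tsub_right_comm]

lemma sum_Iic_sum_Iic_tsub_eq_sum_Iic_sum_Iic (N : MIdx p) (G : MIdx p → MIdx p → M)
    (hG : ∀ β γ, ¬ β + γ ≤ N → G β γ = 0) :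
    ∑ α ∈ Finset.Iic N, ∑ β ∈ Finset.Iic α, G β (α - β)
      = ∑ β ∈ Finset.Iic N, ∑ γ ∈ Finset.Iic N, G β γ := by
  rw [sum_Iic_sum_Iic_assoc N fun b c _ => G b c]
  refine Finset.sum_congr rfl fun β hβ => ?_
  refine Finset.sum_subset (Finset.Iic_subset_Iic.mpr tsub_le_self) fun γ _ hγ => hG β γ ?_
  rw [Finset.mem_Iic, le_tsub_iff_left (Finset.mem_Iic.mp hβ)] at hγ
  exact hγ

end Reindex

section ConstSeries

variable {p : ℕ}

def constSeries {M : Type*} [Zero M] (m : M) : MIdx p → M := fun γ => if γ = 0 then m else 0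

lemma sum_Iic_constSeries_right {M N : Type*} [AddCommMonoid N] [Zero M] (α : MIdx p)
    (G : MIdx p → M → N) (hG : ∀ β, G β 0 = 0) (m : M) :
    ∑ β ∈ Finset.Iic α, G β (constSeries m (α - β)) = G α m := by
  rw [Finset.sum_eq_single_of_mem α (Finset.mem_Iic.mpr le_rfl)]
  · simp [constSeries]
  · intro b hb hbα
    have : α - b ≠ 0 := fun h => hbα (le_antisymm (Finset.mem_Iic.mp hb) (tsub_eq_zero_iff_le.mp h))
    simp [constSeries, this, hG]

lemma fapply_constSeries {k M N : Type*} [Semiring k] [AddCommMonoid M] [AddCommMonoid N]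
    [Module k M] [Module k N] (f : MIdx p → (M →ₗ[k] N)) (m : M) :
    fapply f (constSeries m) = fun α => f α m :=
  funext fun α => sum_Iic_constSeries_right α (fun β x => f β x) (fun _ => map_zero _) m

lemma smul'_constSeries {A M : Type*} [Semiring A] [AddCommMonoid M] [Module A M]
    (a : A) (m : M) :
    smul' (constSeries a) (constSeries m) = (constSeries (a • m) : MIdx p → M) := by
  funext α
  rw [smul', sum_Iic_constSeries_right α (fun β x => constSeries a β • x) (fun β => smul_zero _)]
  by_cases hα : α = 0 <;> simp [constSeries, hα]

lemma muconv_constSeries {A E F : Type*} [CommRing A] [AddCommGroup E] [Module A E]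
    [AddCommGroup F] [Module A F] (x : E) (y : F) :
    muconv (constSeries x) (constSeries y) = (constSeries (x ⊗ₜ[A] y) : MIdx p → E ⊗[A] F) := by
  funext α
  rw [muconv, sum_Iic_constSeries_right α (fun β z => constSeries x β ⊗ₜ[A] z)
    (fun β => TensorProduct.tmul_zero _ _)]
  by_cases hα : α = 0 <;> simp [constSeries, hα]

end ConstSeries

section ConvInv

variable {p : ℕ} {R : Type*} [Ring R]

noncomputable def convInv (f : MIdx p → R) : MIdx p → R
  | α =>
    if α = 0 then 1
    else - ∑ β ∈ ((Finset.Iic α).erase 0).attach, f β.1 * convInv f (α - β.1)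
  termination_by α => wt α
  decreasing_by
    have hβ := β.2
    rw [Finset.mem_erase, Finset.mem_Iic] at hβ
    exact wt_sub_lt hβ.2 hβ.1

lemma convInv_zero (f : MIdx p → R) : convInv f 0 = 1 := by
  rw [convInv, if_pos rfl]

lemma one'_sconv (f : MIdx p → R) : sconv one' f = f := by
  funext α
  rw [sconv, Finset.sum_eq_single_of_mem 0 (Finset.mem_Iic.mpr zero_le)]
  · simp [one']
  · intro b _ hb
    simp [one', hb]

lemma sconv_one' (f : MIdx p → R) : sconv f one' = f := by
  funext α
  rw [sconv, ← mul_one (f α)]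
  exact sum_Iic_constSeries_right α (fun β x => f β * x) (fun β => mul_zero _) 1

lemma sconv_assoc (f g h : MIdx p → R) : sconv (sconv f g) h = sconv f (sconv g h) := by
  funext α
  simp only [sconv, Finset.sum_mul, Finset.mul_sum, mul_assoc]
  exact sum_Iic_sum_Iic_assoc α fun a b c => f a * (g b * h c)

lemma sconv_convInv {f : MIdx p → R} (hf : f 0 = 1) : sconv f (convInv f) = one' := by
  funext α
  by_cases hα : α = 0
  · subst hα
    simp [sconv, Iic_zero, one', hf, convInv_zero]
  · have hrec : convInv f α = - ∑ β ∈ (Finset.Iic α).erase 0, f β * convInv f (α - β) := by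
      rw [convInv, if_neg hα, Finset.sum_attach ((Finset.Iic α).erase 0)
        fun β => f β * convInv f (α - β)]
    rw [sconv, ← Finset.add_sum_erase _ _ (Finset.mem_Iic.mpr zero_le), one', if_neg hα,
      tsub_zero, hf, one_mul, hrec, neg_add_cancel]

/-- A right inverse of `convInv f` exists too, so it equals `f`. -/
lemma convInv_sconv {f : MIdx p → R} (hf : f 0 = 1) : sconv (convInv f) f = one' := by
  have hinv : sconv (convInv f) (convInv (convInv f)) = one' := sconv_convInv (convInv_zero f)
  have hff : convInv (convInv f) = f := by
    calc convInv (convInv f)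
        = sconv (sconv f (convInv f)) (convInv (convInv f)) := by
          rw [sconv_convInv hf, one'_sconv]
      _ = f := by rw [sconv_assoc, hinv, sconv_one']
  rwa [hff] at hinv

end ConvInv

section Leibniz

variable {p : ℕ} {k A M : Type*} [Semiring k] [Semiring A] [Module k A]
  [AddCommMonoid M] [Module k M] [Module A M]

def IsLeibnizOver (Δ : Set (MIdx p)) (D : MIdx p → Module.End k A)
    (Ψ : MIdx p → Module.End k M) : Prop :=
  ∀ α ∈ Δ, ∀ (c : A) (m : M), Ψ α (c • m) = smul' (fun γ => D γ c) (fun γ => Ψ γ m) α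

lemma fapply_smul'_iff {Δ : Set (MIdx p)} (hΔ : IsCoideal Δ) {Ψ : MIdx p → Module.End k M}
    {D : MIdx p → Module.End k A} :
    (∀ (a : MIdx p → A) (m : MIdx p → M), ∀ α ∈ Δ,
      fapply Ψ (smul' a m) α = smul' (fapply D a) (fapply Ψ m) α) ↔ IsLeibnizOver Δ D Ψ := by
  constructor
  · intro h α hα c m
    have hc := h (constSeries c) (constSeries m) α hα
    simpa only [smul'_constSeries, fapply_constSeries] using hc
  · intro h a m α hα
    calc fapply Ψ (smul' a m) α
        = ∑ β ∈ Finset.Iic α, ∑ u ∈ Finset.Iic (α - β), ∑ v ∈ Finset.Iic β,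
            D v (a u) • Ψ (β - v) (m (α - β - u)) := by
          refine Finset.sum_congr rfl fun β hβ => ?_
          rw [smul', map_sum]
          exact Finset.sum_congr rfl fun u _ =>
            h β (hΔ.mem_of_le hα (Finset.mem_Iic.mp hβ)) _ _
      _ = ∑ γ ∈ Finset.Iic α, ∑ u ∈ Finset.Iic γ, ∑ v ∈ Finset.Iic (α - γ),
            D u (a (γ - u)) • Ψ v (m (α - γ - v)) :=
          sum_Iic_interchange α fun a' b c d => D a' (a b) • Ψ c (m d)
      _ = smul' (fapply D a) (fapply Ψ m) α := by
          simp only [smul', fapply, Finset.sum_smul, Finset.smul_sum]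
          exact Finset.sum_congr rfl fun _ _ => Finset.sum_comm

end Leibniz

namespace SubstMap

variable {A : Type*} [CommRing A] {p q : ℕ} {Δ : Set (MIdx p)} {nab : Set (MIdx q)}
  (φ : SubstMap A p q Δ nab)

lemma C_eq_zero_of_not_le {α : MIdx p} {e : MIdx q} (he : e ∈ nab)
    (h : ¬ α ≤ fun _ => wt e) : φ.C α e = 0 := by
  by_cases hα : α ∈ Δ
  · exact φ.c_ord α hα e he (lt_wt_of_not_le_const h)
  · exact φ.c_suppL α hα e

lemma C_add (hΔ : IsCoideal Δ) (β γ : MIdx p) {e : MIdx q} (he : e ∈ nab) :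
    φ.C (β + γ) e = ∑ u ∈ Finset.Iic e, φ.C β u * φ.C γ (e - u) := by
  by_cases hβ : β ∈ Δ
  · by_cases hγ : γ ∈ Δ
    · exact φ.c_mul β hβ γ hγ e he
    · have hβγ : β + γ ∉ Δ := fun h => hγ (hΔ.mem_of_le h le_add_self)
      simp [φ.c_suppL _ hβγ, φ.c_suppL _ hγ]
  · have hβγ : β + γ ∉ Δ := fun h => hβ (hΔ.mem_of_le h le_self_add)
    simp [φ.c_suppL _ hβγ, φ.c_suppL _ hβ]

variable {M : Type*} [AddCommMonoid M] [Module A M]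

lemma bulletM_eq_sum_Iic {e : MIdx q} (he : e ∈ nab) {w : ℕ} (hw : wt e ≤ w)
    (m : MIdx p → M) :
    φ.bulletM m e = ∑ α ∈ Finset.Iic (fun _ => w), φ.C α e • m α := by
  refine Finset.sum_subset (Finset.Iic_subset_Iic.mpr fun _ => hw) fun α _ hα => ?_
  rw [φ.C_eq_zero_of_not_le he (Finset.mem_Iic.not.mp hα), zero_smul]

lemma bulletM_congr {m m' : MIdx p → M} (h : Set.EqOn m m' Δ) (e : MIdx q) :
    φ.bulletM m e = φ.bulletM m' e := by
  refine Finset.sum_congr rfl fun α _ => ?_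
  by_cases hα : α ∈ Δ
  · rw [h hα]
  · simp [φ.c_suppL α hα]

/-- `φ` is multiplicative: `φ • (g₁ g₂) = (φ • g₁)(φ • g₂)` for the product of series
induced by any bilinear map `B`. -/
lemma bulletM_bilinear_conv (hΔ : IsCoideal Δ) (hnab : IsCoideal nab) {e : MIdx q}
    (he : e ∈ nab) {M₁ M₂ : Type*} [AddCommMonoid M₁] [Module A M₁] [AddCommMonoid M₂]
    [Module A M₂] (B : M₁ →ₗ[A] M₂ →ₗ[A] M) (g₁ : MIdx p → M₁) (g₂ : MIdx p → M₂) :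
    φ.bulletM (fun α => ∑ β ∈ Finset.Iic α, B (g₁ β) (g₂ (α - β))) e
      = ∑ u ∈ Finset.Iic e, B (φ.bulletM g₁ u) (φ.bulletM g₂ (e - u)) := by
  set N : MIdx p := fun _ => wt e
  have hLHS : φ.bulletM (fun α => ∑ β ∈ Finset.Iic α, B (g₁ β) (g₂ (α - β))) e
      = ∑ β ∈ Finset.Iic N, ∑ γ ∈ Finset.Iic N, φ.C (β + γ) e • B (g₁ β) (g₂ γ) := by
    rw [← sum_Iic_sum_Iic_tsub_eq_sum_Iic_sum_Iic N _ fun β γ h => by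
      rw [φ.C_eq_zero_of_not_le he h, zero_smul]]
    refine Finset.sum_congr rfl fun α _ => ?_
    rw [Finset.smul_sum]
    exact Finset.sum_congr rfl fun β hβ => by rw [add_tsub_cancel_of_le (Finset.mem_Iic.mp hβ)]
  have hbullet₁ : ∀ u ∈ Finset.Iic e, φ.bulletM g₁ u = ∑ β ∈ Finset.Iic N, φ.C β u • g₁ β :=
    fun u hu => φ.bulletM_eq_sum_Iic (hnab.mem_of_le he (Finset.mem_Iic.mp hu))
      (wt_mono (Finset.mem_Iic.mp hu)) g₁
  have hbullet₂ : ∀ u ∈ Finset.Iic e,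
      φ.bulletM g₂ (e - u) = ∑ γ ∈ Finset.Iic N, φ.C γ (e - u) • g₂ γ :=
    fun u _ => φ.bulletM_eq_sum_Iic (hnab.mem_of_le he tsub_le_self) (wt_mono tsub_le_self) g₂
  calc φ.bulletM (fun α => ∑ β ∈ Finset.Iic α, B (g₁ β) (g₂ (α - β))) e
      = ∑ β ∈ Finset.Iic N, ∑ γ ∈ Finset.Iic N,
          ∑ u ∈ Finset.Iic e, (φ.C β u * φ.C γ (e - u)) • B (g₁ β) (g₂ γ) := by
        simp only [hLHS, φ.C_add hΔ _ _ he, Finset.sum_smul]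
    _ = ∑ u ∈ Finset.Iic e, ∑ β ∈ Finset.Iic N, ∑ γ ∈ Finset.Iic N,
          (φ.C β u * φ.C γ (e - u)) • B (g₁ β) (g₂ γ) :=
        (Finset.sum_congr rfl fun β _ => Finset.sum_comm).trans Finset.sum_comm
    _ = ∑ u ∈ Finset.Iic e, B (φ.bulletM g₁ u) (φ.bulletM g₂ (e - u)) := by
        refine Finset.sum_congr rfl fun u hu => ?_
        simp only [hbullet₁ u hu, hbullet₂ u hu, map_sum, LinearMap.sum_apply, map_smul,
          LinearMap.smul_apply, Finset.smul_sum, smul_smul]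
        rw [Finset.sum_comm]
        exact Finset.sum_congr rfl fun β _ => Finset.sum_congr rfl fun γ _ => by rw [mul_comm]

lemma bulletEnd_apply {k : Type*} [CommRing k] [Algebra k A] (D : MIdx p → Module.End k A)
    (e : MIdx q) (x : A) : φ.bulletEnd D e x = φ.bulletM (fun α => D α x) e := by
  simp [bulletEnd, bulletM, LinearMap.sum_apply]

end SubstMap

section HSDerivation

variable {k A : Type*} [CommRing k] [CommRing A] [Algebra k A] {p : ℕ} {Δ : Set (MIdx p)}

lemma IsHS.sconv (hΔ : IsCoideal Δ) {D E : MIdx p → Module.End k A} (hD : IsHS k A Δ D)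
    (hE : IsHS k A Δ E) : IsHS k A Δ (sconv D E) := by
  refine ⟨by simp [HS.sconv, Iic_zero, hD.1, hE.1], fun α hα x y => ?_⟩
  calc HS.sconv D E α (x * y)
      = ∑ β ∈ Finset.Iic α, ∑ u ∈ Finset.Iic (α - β), ∑ v ∈ Finset.Iic β,
          D v (E u x) * D (β - v) (E (α - β - u) y) := by
        simp only [HS.sconv, LinearMap.sum_apply, Module.End.mul_apply]
        refine Finset.sum_congr rfl fun β hβ => ?_
        rw [hE.2 (α - β) (hΔ.mem_of_le hα tsub_le_self), map_sum]
        exact Finset.sum_congr rfl fun u _ =>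
          hD.2 β (hΔ.mem_of_le hα (Finset.mem_Iic.mp hβ)) _ _
    _ = ∑ γ ∈ Finset.Iic α, ∑ u ∈ Finset.Iic γ, ∑ v ∈ Finset.Iic (α - γ),
          D u (E (γ - u) x) * D v (E (α - γ - v) y) :=
        sum_Iic_interchange α fun a b c d => D a (E b x) * D c (E d y)
    _ = ∑ γ ∈ Finset.Iic α, HS.sconv D E γ x * HS.sconv D E (α - γ) y := by
        simp only [HS.sconv, LinearMap.sum_apply, Module.End.mul_apply, Finset.sum_mul,
          Finset.mul_sum]
        exact Finset.sum_congr rfl fun _ _ => Finset.sum_comm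

lemma IsHS.bulletEnd {q : ℕ} {nab : Set (MIdx q)} (hΔ : IsCoideal Δ) (hnab : IsCoideal nab)
    (φ : SubstMap A p q Δ nab) {D : MIdx p → Module.End k A} (hD : IsHS k A Δ D) :
    IsHS k A nab (φ.bulletEnd D) := by
  have hwt0 : (fun _ => wt (0 : MIdx q) : MIdx p) = 0 := by
    funext
    simp [wt]
  refine ⟨?_, fun e he x y => ?_⟩
  · simp [SubstMap.bulletEnd, hwt0, Iic_zero, φ.c_zero 0 hnab.zero_mem, hD.1]
  · have hleib : Set.EqOn (fun α => D α (x * y))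
        (fun α => ∑ β ∈ Finset.Iic α, LinearMap.mul A A (D β x) (D (α - β) y)) Δ :=
      fun α hα => hD.2 α hα x y
    rw [φ.bulletEnd_apply, φ.bulletM_congr hleib,
      φ.bulletM_bilinear_conv hΔ hnab he (LinearMap.mul A A) (fun β => D β x) (fun β => D β y)]
    simp only [φ.bulletEnd_apply, LinearMap.mul_apply']

end HSDerivation

lemma linearMap_ext_tmul {k A E F P : Type*} [CommSemiring k] [CommSemiring A] [Algebra k A]
    [AddCommMonoid E] [Module k E] [Module A E] [IsScalarTower k A E] [AddCommMonoid F] [Module A F]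
    [AddCommMonoid P] [Module k P] {g h : E ⊗[A] F →ₗ[k] P}
    (H : ∀ (x : E) (y : F), g (x ⊗ₜ[A] y) = h (x ⊗ₜ[A] y)) : g = h := by
  ext t
  induction t using TensorProduct.induction_on with
  | zero => simp
  | tmul x y => exact H x y
  | add s t hs ht => rw [map_add, map_add, hs, ht]

section TensorSeries

variable {k A E F : Type*} [CommRing k] [CommRing A] [Algebra k A]
  [AddCommGroup E] [Module k E] [Module A E] [IsScalarTower k A E]
  [AddCommGroup F] [Module k F] [Module A F] {p : ℕ} {Δ : Set (MIdx p)}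

def IsTensorSeries (Δ : Set (MIdx p)) (Θ : MIdx p → Module.End k (E ⊗[A] F))
    (Ψ₁ : MIdx p → Module.End k E) (Ψ₂ : MIdx p → Module.End k F) : Prop :=
  ∀ α ∈ Δ, ∀ (x : E) (y : F), Θ α (x ⊗ₜ[A] y) = muconv (fun β => Ψ₁ β x) (fun β => Ψ₂ β y) α

variable {Θ Θ' : MIdx p → Module.End k (E ⊗[A] F)}
  {Ψ₁ Ψ₁' : MIdx p → Module.End k E} {Ψ₂ Ψ₂' : MIdx p → Module.End k F}

lemma isTensorSeries_iff (hΔ : IsCoideal Δ) :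
    IsTensorSeries Δ Θ Ψ₁ Ψ₂ ↔ ∀ (eS : MIdx p → E) (fS : MIdx p → F), ∀ α ∈ Δ,
      fapply Θ (muconv eS fS) α = muconv (fapply Ψ₁ eS) (fapply Ψ₂ fS) α := by
  constructor
  · intro hΘ eS fS α hα
    calc fapply Θ (muconv eS fS) α
        = ∑ β ∈ Finset.Iic α, ∑ u ∈ Finset.Iic (α - β), ∑ v ∈ Finset.Iic β,
            Ψ₁ v (eS u) ⊗ₜ[A] Ψ₂ (β - v) (fS (α - β - u)) := by
          refine Finset.sum_congr rfl fun β hβ => ?_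
          rw [muconv, map_sum]
          exact Finset.sum_congr rfl fun u _ =>
            hΘ β (hΔ.mem_of_le hα (Finset.mem_Iic.mp hβ)) _ _
      _ = ∑ γ ∈ Finset.Iic α, ∑ u ∈ Finset.Iic γ, ∑ v ∈ Finset.Iic (α - γ),
            Ψ₁ u (eS (γ - u)) ⊗ₜ[A] Ψ₂ v (fS (α - γ - v)) :=
          sum_Iic_interchange α fun a b c d => Ψ₁ a (eS b) ⊗ₜ[A] Ψ₂ c (fS d)
      _ = muconv (fapply Ψ₁ eS) (fapply Ψ₂ fS) α := by
          simp only [muconv, fapply, TensorProduct.sum_tmul, TensorProduct.tmul_sum]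
          exact Finset.sum_congr rfl fun _ _ => Finset.sum_comm
  · intro h α hα x y
    have hc := h (constSeries x) (constSeries y) α hα
    simpa only [muconv_constSeries, fapply_constSeries] using hc

lemma IsTensorSeries.eqOn (hΔ : IsCoideal Δ) (hΘ : IsTensorSeries Δ Θ Ψ₁ Ψ₂)
    (hΘ' : IsTensorSeries Δ Θ' Ψ₁' Ψ₂') (h₁ : Set.EqOn Ψ₁ Ψ₁' Δ) (h₂ : Set.EqOn Ψ₂ Ψ₂' Δ) :
    Set.EqOn Θ Θ' Δ := by
  intro α hα
  refine linearMap_ext_tmul fun x y => ?_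
  rw [hΘ α hα, hΘ' α hα]
  refine Finset.sum_congr rfl fun β hβ => ?_
  dsimp only
  rw [h₁ (hΔ.mem_of_le hα (Finset.mem_Iic.mp hβ)), h₂ (hΔ.mem_of_le hα tsub_le_self)]

lemma IsTensorSeries.apply_zero (h0 : (0 : MIdx p) ∈ Δ) (hΘ : IsTensorSeries Δ Θ Ψ₁ Ψ₂)
    (h₁ : Ψ₁ 0 = 1) (h₂ : Ψ₂ 0 = 1) : Θ 0 = 1 :=
  linearMap_ext_tmul fun x y => by simp [hΘ 0 h0, muconv, Iic_zero, h₁, h₂]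

lemma IsTensorSeries.sconv (hΔ : IsCoideal Δ) (hΘ : IsTensorSeries Δ Θ Ψ₁ Ψ₂)
    (hΘ' : IsTensorSeries Δ Θ' Ψ₁' Ψ₂') :
    IsTensorSeries Δ (HS.sconv Θ Θ') (HS.sconv Ψ₁ Ψ₁') (HS.sconv Ψ₂ Ψ₂') := by
  intro α hα x y
  calc HS.sconv Θ Θ' α (x ⊗ₜ[A] y)
      = ∑ β ∈ Finset.Iic α, ∑ u ∈ Finset.Iic (α - β), ∑ v ∈ Finset.Iic β,
          Ψ₁ v (Ψ₁' u x) ⊗ₜ[A] Ψ₂ (β - v) (Ψ₂' (α - β - u) y) := by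
        simp only [HS.sconv, LinearMap.sum_apply, Module.End.mul_apply]
        refine Finset.sum_congr rfl fun β hβ => ?_
        rw [hΘ' (α - β) (hΔ.mem_of_le hα tsub_le_self), muconv, map_sum]
        exact Finset.sum_congr rfl fun u _ =>
          hΘ β (hΔ.mem_of_le hα (Finset.mem_Iic.mp hβ)) _ _
    _ = ∑ γ ∈ Finset.Iic α, ∑ u ∈ Finset.Iic γ, ∑ v ∈ Finset.Iic (α - γ),
          Ψ₁ u (Ψ₁' (γ - u) x) ⊗ₜ[A] Ψ₂ v (Ψ₂' (α - γ - v) y) :=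
        sum_Iic_interchange α fun a b c d => Ψ₁ a (Ψ₁' b x) ⊗ₜ[A] Ψ₂ c (Ψ₂' d y)
    _ = muconv (fun β => HS.sconv Ψ₁ Ψ₁' β x) (fun β => HS.sconv Ψ₂ Ψ₂' β y) α := by
        simp only [muconv, HS.sconv, LinearMap.sum_apply, Module.End.mul_apply,
          TensorProduct.sum_tmul, TensorProduct.tmul_sum]
        exact Finset.sum_congr rfl fun _ _ => Finset.sum_comm

variable {D : MIdx p → Module.End k A}

lemma IsTensorSeries.isLeibnizOver (hΔ : IsCoideal Δ) (hΘ : IsTensorSeries Δ Θ Ψ₁ Ψ₂)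
    (hs₁ : IsLeibnizOver Δ D Ψ₁) : IsLeibnizOver Δ D Θ := by
  intro α hα c t
  induction t using TensorProduct.induction_on with
  | zero => simp [smul']
  | add s t hs ht => simp only [smul_add, map_add, hs, ht, smul', Finset.sum_add_distrib]
  | tmul x y =>
    calc Θ α (c • x ⊗ₜ[A] y)
        = ∑ β ∈ Finset.Iic α, ∑ γ ∈ Finset.Iic β,
            D γ c • (Ψ₁ (β - γ) x ⊗ₜ[A] Ψ₂ (α - β) y) := by
          rw [TensorProduct.smul_tmul', hΘ α hα]
          refine Finset.sum_congr rfl fun β hβ => ?_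
          dsimp only
          rw [hs₁ β (hΔ.mem_of_le hα (Finset.mem_Iic.mp hβ)), smul', TensorProduct.sum_tmul]
          exact Finset.sum_congr rfl fun γ _ => TensorProduct.smul_tmul' _ _ _
      _ = ∑ γ ∈ Finset.Iic α, ∑ u ∈ Finset.Iic (α - γ),
            D γ c • (Ψ₁ u x ⊗ₜ[A] Ψ₂ (α - γ - u) y) :=
          sum_Iic_sum_Iic_assoc α fun a b r => D a c • (Ψ₁ b x ⊗ₜ[A] Ψ₂ r y)
      _ = smul' (fun γ => D γ c) (fun γ => Θ γ (x ⊗ₜ[A] y)) α := by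
          refine Finset.sum_congr rfl fun γ _ => ?_
          dsimp only
          rw [hΘ (α - γ) (hΔ.mem_of_le hα tsub_le_self), muconv, Finset.smul_sum]

end TensorSeries

section TensorSeriesConstruction

variable {k A E F : Type*} [CommRing k] [CommRing A] [Algebra k A]
  [AddCommGroup E] [Module k E] [Module A E] [AddCommGroup F] [Module k F] [Module A F]
  {p : ℕ} {Δ : Set (MIdx p)}
  {Ψ₁ : MIdx p → Module.End k E} {Ψ₂ : MIdx p → Module.End k F} {D : MIdx p → Module.End k A}

/-- Both sides equal `∑_{u + γ + v = α} Ψ₁_u(x) ⊗ D_γ(c) Ψ₂_v(y)`. -/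
lemma muconv_smul_left_eq_smul_right (hΔ : IsCoideal Δ)
    (hs₁ : IsLeibnizOver Δ D Ψ₁) (hs₂ : IsLeibnizOver Δ D Ψ₂)
    {α : MIdx p} (hα : α ∈ Δ) (c : A) (x : E) (y : F) :
    muconv (A := A) (fun β => Ψ₁ β (c • x)) (fun β => Ψ₂ β y) α
      = muconv (fun β => Ψ₁ β x) (fun β => Ψ₂ β (c • y)) α := by
  calc muconv (A := A) (fun β => Ψ₁ β (c • x)) (fun β => Ψ₂ β y) α
      = ∑ β ∈ Finset.Iic α, ∑ γ ∈ Finset.Iic β,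
          Ψ₁ (β - γ) x ⊗ₜ[A] (D γ c • Ψ₂ (α - β) y) := by
        refine Finset.sum_congr rfl fun β hβ => ?_
        dsimp only
        rw [hs₁ β (hΔ.mem_of_le hα (Finset.mem_Iic.mp hβ)), smul', TensorProduct.sum_tmul]
        exact Finset.sum_congr rfl fun γ _ => TensorProduct.smul_tmul _ _ _
    _ = ∑ γ ∈ Finset.Iic α, ∑ u ∈ Finset.Iic (α - γ),
          Ψ₁ u x ⊗ₜ[A] (D γ c • Ψ₂ (α - γ - u) y) :=
        sum_Iic_sum_Iic_assoc α fun a b r => Ψ₁ b x ⊗ₜ[A] (D a c • Ψ₂ r y)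
    _ = ∑ u ∈ Finset.Iic α, ∑ γ ∈ Finset.Iic (α - u),
          Ψ₁ u x ⊗ₜ[A] (D γ c • Ψ₂ (α - u - γ) y) := by
        rw [sum_Iic_sum_Iic_tsub_comm α fun a u => Ψ₁ u x ⊗ₜ[A] (D a c • Ψ₂ (α - a - u) y)]
        simp only [tsub_right_comm]
    _ = muconv (fun β => Ψ₁ β x) (fun β => Ψ₂ β (c • y)) α := by
        refine Finset.sum_congr rfl fun u _ => ?_
        dsimp only
        rw [hs₂ (α - u) (hΔ.mem_of_le hα tsub_le_self), smul', TensorProduct.tmul_sum]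

variable [IsScalarTower k A E]

noncomputable def tensorCoeff (Ψ₁ : MIdx p → Module.End k E) (Ψ₂ : MIdx p → Module.End k F)
    (α : MIdx p) (hbal : ∀ (c : A) (x : E) (y : F),
      muconv (A := A) (fun β => Ψ₁ β (c • x)) (fun β => Ψ₂ β y) α
        = muconv (fun β => Ψ₁ β x) (fun β => Ψ₂ β (c • y)) α) :
    Module.End k (E ⊗[A] F) where
  toFun := TensorProduct.liftAddHom
    (AddMonoidHom.mk'
      (fun x => AddMonoidHom.mk' (fun y => muconv (fun β => Ψ₁ β x) (fun β => Ψ₂ β y) α)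
        fun y z => by simp [muconv, TensorProduct.tmul_add, Finset.sum_add_distrib])
      fun x x' => AddMonoidHom.ext fun y => by
        simp [muconv, TensorProduct.add_tmul, Finset.sum_add_distrib])
    hbal
  map_add' := map_add _
  map_smul' c t := by
    induction t using TensorProduct.induction_on with
    | zero => simp
    | add s t hs ht => simp only [smul_add, map_add, hs, ht]
    | tmul x y =>
      simp only [TensorProduct.smul_tmul', TensorProduct.liftAddHom_tmul,
        AddMonoidHom.mk'_apply, muconv, map_smul, Finset.smul_sum, RingHom.id_apply]

lemma tensorCoeff_tmul {α : MIdx p} (hbal : ∀ (c : A) (x : E) (y : F),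
      muconv (A := A) (fun β => Ψ₁ β (c • x)) (fun β => Ψ₂ β y) α
        = muconv (fun β => Ψ₁ β x) (fun β => Ψ₂ β (c • y)) α) (x : E) (y : F) :
    tensorCoeff Ψ₁ Ψ₂ α hbal (x ⊗ₜ[A] y) = muconv (fun β => Ψ₁ β x) (fun β => Ψ₂ β y) α :=
  rfl

lemma exists_isTensorSeries (hΔ : IsCoideal Δ)
    (hs₁ : IsLeibnizOver Δ D Ψ₁) (hs₂ : IsLeibnizOver Δ D Ψ₂) :
    ∃ Θ : MIdx p → Module.End k (E ⊗[A] F), IsTensorSeries Δ Θ Ψ₁ Ψ₂ := by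
  refine ⟨fun α => if hα : α ∈ Δ then
    tensorCoeff Ψ₁ Ψ₂ α (muconv_smul_left_eq_smul_right hΔ hs₁ hs₂ hα) else 0, ?_⟩
  intro α hα x y
  simp only [dif_pos hα, tensorCoeff_tmul]

lemma IsTensorSeries.bulletM {q : ℕ} {nab : Set (MIdx q)} (hΔ : IsCoideal Δ)
    (hnab : IsCoideal nab) (φ : SubstMap A p q Δ nab) {Θ : MIdx p → Module.End k (E ⊗[A] F)}
    (hΘ : IsTensorSeries Δ Θ Ψ₁ Ψ₂) {Θ' : MIdx q → Module.End k (E ⊗[A] F)}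
    {Ψ₁' : MIdx q → Module.End k E} {Ψ₂' : MIdx q → Module.End k F}
    (hΘ' : IsTensorSeries nab Θ' Ψ₁' Ψ₂')
    (h₁ : ∀ e ∈ nab, ∀ x : E, Ψ₁' e x = φ.bulletM (fun α => Ψ₁ α x) e)
    (h₂ : ∀ e ∈ nab, ∀ y : F, Ψ₂' e y = φ.bulletM (fun α => Ψ₂ α y) e) :
    ∀ e ∈ nab, ∀ t : E ⊗[A] F, Θ' e t = φ.bulletM (fun α => Θ α t) e := by
  intro e he t
  induction t using TensorProduct.induction_on with
  | zero => simp [SubstMap.bulletM]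
  | add s t hs ht =>
    rw [map_add, hs, ht]
    simp only [SubstMap.bulletM, map_add, smul_add, Finset.sum_add_distrib]
  | tmul x y =>
    have hΘxy : Set.EqOn (fun α => Θ α (x ⊗ₜ[A] y))
        (fun α => ∑ β ∈ Finset.Iic α, TensorProduct.mk A E F (Ψ₁ β x) (Ψ₂ (α - β) y)) Δ :=
      fun α hα => hΘ α hα x y
    rw [φ.bulletM_congr hΘxy, φ.bulletM_bilinear_conv hΔ hnab he (TensorProduct.mk A E F)
      (fun β => Ψ₁ β x) (fun β => Ψ₂ β y), hΘ' e he]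
    refine Finset.sum_congr rfl fun u hu => ?_
    dsimp only
    rw [h₁ u (hnab.mem_of_le he (Finset.mem_Iic.mp hu)),
      h₂ (e - u) (hnab.mem_of_le he tsub_le_self)]
    rfl

end TensorSeriesConstruction

section Structure

variable {k A : Type*} [CommRing k] [CommRing A] [Algebra k A]

lemma exists_sconv_inverse {p : ℕ} {R : Type*} [Ring R] (Δ : Set (MIdx p)) {f : MIdx p → R}
    (hf : f 0 = 1) :
    ∃ g : MIdx p → R, (∀ α ∈ Δ, sconv f g α = one' α) ∧ (∀ α ∈ Δ, sconv g f α = one' α) :=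
  ⟨convInv f, fun α _ => congrFun (sconv_convInv hf) α, fun α _ => congrFun (convInv_sconv hf) α⟩

/-- `IsPreHSMod` and `IsHSMod` are the cases where the admissible substitution maps are those
with constant coefficients, respectively all of them. -/
def IsHSModFor (k A M : Type*) [CommRing k] [CommRing A] [Algebra k A]
    [AddCommGroup M] [Module k M] [Module A M] [IsScalarTower k A M]
    (adm : ∀ (p q : ℕ) (Δ : Set (MIdx p)) (nab : Set (MIdx q)), SubstMap A p q Δ nab → Prop)
    (Ψ : HSSystem k A M) : Prop :=
  ∀ (p : ℕ) (Δ : Set (MIdx p)), IsCoideal Δ →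
    ∀ D : MIdx p → Module.End k A, IsHS k A Δ D →
      (Ψ p Δ D 0 = 1)
      ∧ (∀ D' : MIdx p → Module.End k A, IsHS k A Δ D' → (∀ α ∈ Δ, D α = D' α) →
          ∀ α ∈ Δ, Ψ p Δ D α = Ψ p Δ D' α)
      ∧ (∀ E : MIdx p → Module.End k A, IsHS k A Δ E →
          ∀ α ∈ Δ, Ψ p Δ (sconv D E) α = sconv (Ψ p Δ D) (Ψ p Δ E) α)
      ∧ (∃ Θ : MIdx p → Module.End k M,
          (∀ α ∈ Δ, sconv (Ψ p Δ D) Θ α = (one' : MIdx p → Module.End k M) α)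
          ∧ (∀ α ∈ Δ, sconv Θ (Ψ p Δ D) α = (one' : MIdx p → Module.End k M) α))
      ∧ (∀ (a : MIdx p → A) (m : MIdx p → M), ∀ α ∈ Δ,
          fapply (Ψ p Δ D) (smul' a m) α = smul' (fapply D a) (fapply (Ψ p Δ D) m) α)
      ∧ (∀ (q : ℕ) (nab : Set (MIdx q)), IsCoideal nab →
          ∀ φ : SubstMap A p q Δ nab, adm p q Δ nab φ →
          ∀ e ∈ nab, ∀ x : M,
            Ψ q nab (φ.bulletEnd D) e x
              = ∑ α ∈ Finset.Iic (fun _ => wt e : MIdx p), φ.C α e • Ψ p Δ D α x)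

variable {M : Type*} [AddCommGroup M] [Module k M] [Module A M] [IsScalarTower k A M]
  {Ψ : HSSystem k A M}

lemma isPreHSMod_iff_isHSModFor :
    IsPreHSMod k A M Ψ ↔ IsHSModFor k A M (fun _ _ _ _ φ => φ.HasConstCoeffs k) Ψ :=
  Iff.rfl

lemma isHSMod_iff_isHSModFor : IsHSMod k A M Ψ ↔ IsHSModFor k A M (fun _ _ _ _ _ => True) Ψ := by
  simp only [IsHSMod, IsHSModFor, true_implies]

lemma IsPreHSMod.isLeibnizOver (hΨ : IsPreHSMod k A M Ψ) {p : ℕ} {Δ : Set (MIdx p)}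
    (hΔ : IsCoideal Δ) {D : MIdx p → Module.End k A} (hD : IsHS k A Δ D) :
    IsLeibnizOver Δ D (Ψ p Δ D) :=
  (fapply_smul'_iff hΔ).mp (hΨ p Δ hΔ D hD).2.2.2.2.1

variable {E F : Type*} [AddCommGroup E] [Module k E] [Module A E] [IsScalarTower k A E]
  [AddCommGroup F] [Module k F] [Module A F] [IsScalarTower k A F]
  {adm : ∀ (p q : ℕ) (Δ : Set (MIdx p)) (nab : Set (MIdx q)), SubstMap A p q Δ nab → Prop}
  {Ψ₁ : HSSystem k A E} {Ψ₂ : HSSystem k A F}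

theorem IsHSModFor.tensor (h₁ : IsHSModFor k A E adm Ψ₁) (h₂ : IsHSModFor k A F adm Ψ₂)
    {Θ : HSSystem k A (E ⊗[A] F)}
    (hΘ : ∀ (p : ℕ) (Δ : Set (MIdx p)), IsCoideal Δ → ∀ D : MIdx p → Module.End k A,
      IsHS k A Δ D → IsTensorSeries Δ (Θ p Δ D) (Ψ₁ p Δ D) (Ψ₂ p Δ D)) :
    IsHSModFor k A (E ⊗[A] F) adm Θ := by
  intro p Δ hΔ D hD
  obtain ⟨one₁, congr₁, mul₁, -, leib₁, subst₁⟩ := h₁ p Δ hΔ D hD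
  obtain ⟨one₂, congr₂, mul₂, -, -, subst₂⟩ := h₂ p Δ hΔ D hD
  have hT := hΘ p Δ hΔ D hD
  have one : Θ p Δ D 0 = 1 := hT.apply_zero hΔ.zero_mem one₁ one₂
  refine ⟨one, fun D' hD' hDD' => ?_, fun D' hD' => ?_, exists_sconv_inverse Δ one, ?_,
    fun q nab hnab φ hφ => ?_⟩
  · exact hT.eqOn hΔ (hΘ p Δ hΔ D' hD') (congr₁ D' hD' hDD') (congr₂ D' hD' hDD')
  · exact (hΘ p Δ hΔ _ (hD.sconv hΔ hD')).eqOn hΔ (hT.sconv hΔ (hΘ p Δ hΔ D' hD'))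
      (mul₁ D' hD') (mul₂ D' hD')
  · rw [fapply_smul'_iff hΔ] at leib₁ ⊢
    exact hT.isLeibnizOver hΔ leib₁
  · exact hT.bulletM hΔ hnab φ (hΘ q nab hnab _ (hD.bulletEnd hΔ hnab φ))
      (subst₁ q nab hnab φ hφ) (subst₂ q nab hnab φ hφ)

end Structure

/-- Let `(E,Ψ₁)` and `(F,Ψ₂)` be left pre-HS-modules over `A/k`.
(1) For every `p`, every non-empty co-ideal `Δ ⊆ ℕ^p` and every `D ∈ HS^p_k(A;Δ)`,
there is a unique `k[[s]]_Δ`-linear automorphism `Θ` of `(E⊗_A F)[[s]]_Δ`, congruent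
to the identity,  with `Θ ∘ μ = μ ∘ (Ψ₁^p_Δ(D) ⊗ Ψ₂^p_Δ(D))`.  (2) The resulting
system is a left pre-HS-module structure on `E ⊗_A F`, and a HS-module structure
whenever `Ψ₁` and `Ψ₂` are. -/
theorem stmt14 (k A E F : Type*) [CommRing k] [CommRing A] [Algebra k A]
    [AddCommGroup E] [Module k E] [Module A E] [IsScalarTower k A E]
    [AddCommGroup F] [Module k F] [Module A F] [IsScalarTower k A F]
    (Ψ₁ : HSSystem k A E) (Ψ₂ : HSSystem k A F)
    (hΨ₁ : IsPreHSMod k A E Ψ₁) (hΨ₂ : IsPreHSMod k A F Ψ₂) :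
    -- (1)
    (∀ (p : ℕ) (Δ : Set (MIdx p)), IsCoideal Δ →
      ∀ D : MIdx p → Module.End k A, IsHS k A Δ D →
        ∃ Θ : MIdx p → Module.End k (E ⊗[A] F),
          Θ 0 = 1
          ∧ (∀ (eS : MIdx p → E) (fS : MIdx p → F), ∀ α ∈ Δ,
              fapply Θ (muconv eS fS) α
                = muconv (fapply (Ψ₁ p Δ D) eS) (fapply (Ψ₂ p Δ D) fS) α)
          ∧ (∃ Θ' : MIdx p → Module.End k (E ⊗[A] F),
              (∀ α ∈ Δ, sconv Θ Θ' α = (one' : MIdx p → Module.End k (E ⊗[A] F)) α)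
              ∧ (∀ α ∈ Δ, sconv Θ' Θ α = (one' : MIdx p → Module.End k (E ⊗[A] F)) α))
          ∧ (∀ Θ'' : MIdx p → Module.End k (E ⊗[A] F),
              (∀ (eS : MIdx p → E) (fS : MIdx p → F), ∀ α ∈ Δ,
                fapply Θ'' (muconv eS fS) α
                  = muconv (fapply (Ψ₁ p Δ D) eS) (fapply (Ψ₂ p Δ D) fS) α) →
              ∀ α ∈ Δ, Θ'' α = Θ α))
    -- (2) pre-HS-module structure
    ∧ (∀ Θsys : HSSystem k A (E ⊗[A] F),
        (∀ (p : ℕ) (Δ : Set (MIdx p)), IsCoideal Δ →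
          ∀ D : MIdx p → Module.End k A, IsHS k A Δ D →
            ∀ (eS : MIdx p → E) (fS : MIdx p → F), ∀ α ∈ Δ,
              fapply (Θsys p Δ D) (muconv eS fS) α
                = muconv (fapply (Ψ₁ p Δ D) eS) (fapply (Ψ₂ p Δ D) fS) α) →
        IsPreHSMod k A (E ⊗[A] F) Θsys)
    -- (2') HS-module structure when `Ψ₁` and `Ψ₂` are HS-module structures
    ∧ (IsHSMod k A E Ψ₁ → IsHSMod k A F Ψ₂ →
        ∀ Θsys : HSSystem k A (E ⊗[A] F),
        (∀ (p : ℕ) (Δ : Set (MIdx p)), IsCoideal Δ →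
          ∀ D : MIdx p → Module.End k A, IsHS k A Δ D →
            ∀ (eS : MIdx p → E) (fS : MIdx p → F), ∀ α ∈ Δ,
              fapply (Θsys p Δ D) (muconv eS fS) α
                = muconv (fapply (Ψ₁ p Δ D) eS) (fapply (Ψ₂ p Δ D) fS) α) →
        IsHSMod k A (E ⊗[A] F) Θsys) := by
  refine ⟨fun p Δ hΔ D hD => ?_, fun Θ hΘ => ?_, fun h₁ h₂ Θ hΘ => ?_⟩
  · obtain ⟨Θ, hT⟩ := exists_isTensorSeries hΔ (hΨ₁.isLeibnizOver hΔ hD) (hΨ₂.isLeibnizOver hΔ hD)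
    have one : Θ 0 = 1 := hT.apply_zero hΔ.zero_mem (hΨ₁ p Δ hΔ D hD).1 (hΨ₂ p Δ hΔ D hD).1
    exact ⟨Θ, one, (isTensorSeries_iff hΔ).mp hT, exists_sconv_inverse Δ one,
      fun Θ'' hΘ'' => ((isTensorSeries_iff hΔ).mpr hΘ'').eqOn hΔ hT (Set.eqOn_refl _ _)
        (Set.eqOn_refl _ _)⟩
  · exact (isPreHSMod_iff_isHSModFor.mp hΨ₁).tensor (isPreHSMod_iff_isHSModFor.mp hΨ₂)
      fun p Δ hΔ D hD => (isTensorSeries_iff hΔ).mpr (hΘ p Δ hΔ D hD)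
  · rw [isHSMod_iff_isHSModFor] at h₁ h₂ ⊢
    exact h₁.tensor h₂ fun p Δ hΔ D hD => (isTensorSeries_iff hΔ).mpr (hΘ p Δ hΔ D hD)

end HS
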